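/- arXiv:1102.3252 — 5 statements merged into one kernel-verified Lean document; each statement's English description precedes it below -/
import Mathlib

section
/- A subset X of the Cantor space is σ-homogeneous if and only if X can be partitioned into countably many pairwise disjoint subspaces, each of which is closed in X and h-homogeneous in the subspace topology. -/
/-- A topological space is *h-homogeneous* if every nonempty clopen subset,
with the subspace topology, is homeomorphic to the whole space. -/
def HHomogeneous (Y : Type*) [TopologicalSpace Y] : Prop :=
  ∀ U : Set Y, IsClopen U → U.Nonempty → Nonempty (U ≃ₜ Y)

/-- A subset `X` of the Cantor space is *σ-homogeneous* if it is a countable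
union of h-homogeneous subspaces that are closed in `X`. -/
def SigmaHomogeneous (X : Set (ℕ → Bool)) : Prop :=
  ∃ f : ℕ → Set (ℕ → Bool),
    (∀ i, f i ⊆ X) ∧
    (∀ i, IsClosed (Subtype.val ⁻¹' f i : Set ↥X)) ∧
    (∀ i, HHomogeneous ↥(f i)) ∧
    X = ⋃ i, f i

/-!
Disjointify a cover by relatively closed h-homogeneous sets `f i`: the part `f i \ ⋃_{j<i} f j`
that is new at stage `i` is relatively open in `f i`, so it is the trace on `f i` of an open set
of the ambient space, and in a second-countable space with a clopen basis (such as the Cantor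
space) every open set is a countable disjoint union of clopen sets. The traces of those clopen
sets on `f i` are closed in `X`, pairwise disjoint, and h-homogeneous, since a nonempty clopen
subspace of an h-homogeneous space is homeomorphic to the whole space.
-/

open Set Function TopologicalSpace

namespace HHomogeneous

variable {Y Z : Type*} [TopologicalSpace Y] [TopologicalSpace Z]

theorem of_homeomorph (e : Y ≃ₜ Z) (hZ : HHomogeneous Z) : HHomogeneous Y := by
  intro U hU hUne
  obtain ⟨g⟩ := hZ (e '' U) ⟨e.isClosedMap _ hU.1, e.isOpenMap _ hU.2⟩ (hUne.image e)
  exact ⟨(e.image U).trans (g.trans e.symm)⟩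

theorem subtype_of_isClopen (hY : HHomogeneous Y) {U : Set Y} (hU : IsClopen U) :
    HHomogeneous U := by
  rcases U.eq_empty_or_nonempty with rfl | hUne
  · rintro V - ⟨⟨x, hx⟩, -⟩
    exact absurd hx (notMem_empty x)
  · obtain ⟨e⟩ := hY U hU hUne
    exact hY.of_homeomorph e

theorem inter_of_isClopen {α : Type*} [TopologicalSpace α] {A : Set α} (hA : HHomogeneous A)
    {K : Set α} (hK : IsClopen K) : HHomogeneous ↥(K ∩ A) := by
  have e : ↥(Subtype.val ⁻¹' K : Set A) ≃ₜ ↥(K ∩ A) :=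
    (Topology.IsEmbedding.subtypeVal.homeomorphImage _).trans
      (Homeomorph.setCongr (by rw [Subtype.image_preimage_coe, inter_comm]))
  exact (hA.subtype_of_isClopen (hK.preimage continuous_subtype_val)).of_homeomorph e.symm

end HHomogeneous

section ClopenRefinement

variable {α : Type*} [TopologicalSpace α]

theorem isClopen_disjointed {ι : Type*} [Preorder ι] [LocallyFiniteOrderBot ι] {K : ι → Set α}
    (hK : ∀ i, IsClopen (K i)) (i : ι) : IsClopen (disjointed K i) :=
  disjointedRec (fun _ j ht ↦ ht.diff (hK j)) (hK i)

theorem IsOpen.exists_iUnion_isClopen [SecondCountableTopology α]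
    (hB : IsTopologicalBasis {s : Set α | IsClopen s}) {O : Set α} (hO : IsOpen O) :
    ∃ K : ℕ → Set α, (∀ n, IsClopen (K n)) ∧ ⋃ n, K n = O := by
  obtain ⟨T, hTc, hTO, hT⟩ :=
    isOpen_sUnion_countable {s | IsClopen s ∧ s ⊆ O} fun s hs ↦ hs.1.isOpen
  obtain ⟨K, hK⟩ := (hTc.insert ∅).exists_eq_range (insert_nonempty _ _)
  refine ⟨K, fun n ↦ ?_, ?_⟩
  · have hKn : K n ∈ insert ∅ T := hK ▸ mem_range_self n
    rcases hKn with h | h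
    · exact h ▸ isClopen_empty
    · exact (hTO h).1
  · rw [← sUnion_range, ← hK, sUnion_insert, empty_union, hT]
    exact (hB.open_eq_sUnion' hO).symm

theorem IsOpen.exists_iUnion_isClopen_pairwise_disjoint [SecondCountableTopology α]
    (hB : IsTopologicalBasis {s : Set α | IsClopen s}) {O : Set α} (hO : IsOpen O) :
    ∃ K : ℕ → Set α, (∀ n, IsClopen (K n)) ∧ Pairwise (Disjoint on K) ∧ ⋃ n, K n = O := by
  obtain ⟨K, hK, rfl⟩ := hO.exists_iUnion_isClopen hB
  exact ⟨disjointed K, isClopen_disjointed hK, disjoint_disjointed K, iUnion_disjointed⟩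

theorem exists_isOpen_inter_eq_disjointed {X : Set α} {f : ℕ → Set α} (hfX : ∀ i, f i ⊆ X)
    (hf : ∀ i, IsClosed (Subtype.val ⁻¹' f i : Set X)) (i : ℕ) :
    ∃ O, IsOpen O ∧ O ∩ f i = disjointed f i := by
  choose F hF hFf using fun j ↦ isClosed_induced_iff.1 (hf j)
  have hmem : ∀ j, ∀ x ∈ X, x ∈ F j ↔ x ∈ f j := fun j x hx ↦ Set.ext_iff.1 (hFf j) ⟨x, hx⟩
  refine ⟨⋂ j < i, (F j)ᶜ, (finite_Iio i).isOpen_biInter fun j _ ↦ (hF j).isOpen_compl, ?_⟩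
  ext x
  simp only [disjointed_eq_inter_compl, mem_inter_iff, mem_iInter, mem_compl_iff]
  constructor
  · rintro ⟨hxF, hx⟩
    exact ⟨hx, fun j hj ↦ (hmem j x (hfX i hx)).not.1 (hxF j hj)⟩
  · rintro ⟨hx, hxf⟩
    exact ⟨fun j hj ↦ (hmem j x (hfX i hx)).not.2 (hxf j hj), hx⟩

-- `SigmaHomogeneous X` unfolds to `∃ f : ℕ → _, IsClosedHHomogeneousCover X f`.
def IsClosedHHomogeneousCover {ι : Type*} (X : Set α) (f : ι → Set α) : Prop :=
  (∀ i, f i ⊆ X) ∧ (∀ i, IsClosed (Subtype.val ⁻¹' f i : Set X)) ∧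
    (∀ i, HHomogeneous (f i)) ∧ X = ⋃ i, f i

theorem IsClosedHHomogeneousCover.comp_surjective {ι κ : Type*} {X : Set α} {f : ι → Set α}
    (hf : IsClosedHHomogeneousCover X f) {e : κ → ι} (he : Surjective e) :
    IsClosedHHomogeneousCover X (f ∘ e) :=
  ⟨fun k ↦ hf.1 (e k), fun k ↦ hf.2.1 (e k), fun k ↦ hf.2.2.1 (e k),
    hf.2.2.2.trans (he.iUnion_comp f).symm⟩

theorem IsClosedHHomogeneousCover.exists_pairwise_disjoint [SecondCountableTopology α]
    (hB : IsTopologicalBasis {s : Set α | IsClopen s}) {X : Set α} {f : ℕ → Set α}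
    (hf : IsClosedHHomogeneousCover X f) :
    ∃ g : ℕ → Set α, IsClosedHHomogeneousCover X g ∧ Pairwise (Disjoint on g) := by
  obtain ⟨hfX, hfcl, hfh, rfl⟩ := hf
  choose O hO hOf using exists_isOpen_inter_eq_disjointed hfX hfcl
  choose K hK hKdisj hKO using fun i ↦ (hO i).exists_iUnion_isClopen_pairwise_disjoint hB
  set g : ℕ × ℕ → Set α := fun p ↦ K p.1 p.2 ∩ f p.1
  have hg_sub : ∀ p, g p ⊆ disjointed f p.1 := fun p ↦
    hOf p.1 ▸ inter_subset_inter_left _ (hKO p.1 ▸ subset_iUnion (K p.1) p.2)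
  have hcover : IsClosedHHomogeneousCover (⋃ i, f i) g := by
    refine ⟨fun p ↦ inter_subset_right.trans (hfX p.1), fun p ↦ ?_,
      fun p ↦ (hfh p.1).inter_of_isClopen (hK p.1 p.2), ?_⟩
    · rw [preimage_inter]
      exact ((hK p.1 p.2).isClosed.preimage continuous_subtype_val).inter (hfcl p.1)
    · simp only [g, iUnion_prod', ← iUnion_inter, hKO, hOf, iUnion_disjointed]
  have hdisj : Pairwise (Disjoint on g) := by
    rintro ⟨i, m⟩ ⟨j, n⟩ hne
    rcases eq_or_ne i j with rfl | hij
    · exact (hKdisj i fun hmn ↦ hne (congrArg _ hmn)).mono inter_subset_left inter_subset_left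
    · exact (disjoint_disjointed f hij).mono (hg_sub _) (hg_sub _)
  exact ⟨g ∘ Nat.pairEquiv.symm, hcover.comp_surjective Nat.pairEquiv.symm.surjective,
    hdisj.comp_of_injective Nat.pairEquiv.symm.injective⟩

end ClopenRefinement

/-- A subset `X` of the Cantor space is σ-homogeneous iff it can be partitioned
into countably many pairwise disjoint subspaces, each closed in `X` and
h-homogeneous in the subspace topology. -/
theorem sigmaHomogeneous_iff_partition (X : Set (ℕ → Bool)) :
    SigmaHomogeneous X ↔
      ∃ f : ℕ → Set (ℕ → Bool),
        (∀ i, f i ⊆ X) ∧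
        Pairwise (Function.onFun Disjoint f) ∧
        (∀ i, IsClosed (Subtype.val ⁻¹' f i : Set ↥X)) ∧
        (∀ i, HHomogeneous ↥(f i)) ∧
        X = ⋃ i, f i := by
  constructor
  · rintro ⟨f, hf⟩
    obtain ⟨g, ⟨hgX, hgcl, hgh, hXg⟩, hdisj⟩ :=
      IsClosedHHomogeneousCover.exists_pairwise_disjoint isTopologicalBasis_isClopen hf
    exact ⟨g, hgX, hdisj, hgcl, hgh, hXg⟩
  · rintro ⟨f, hfX, -, hfcl, hfh, hXf⟩
    exact ⟨f, hfX, hfcl, hfh, hXf⟩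
end

section
/- Every Fσ subset X of the Cantor space can be written as a union of countably many pairwise disjoint sets, each closed in X, such that each of them (with the subspace topology) is homeomorphic to a one-point space, or to the Cantor space, or to the space of irrational numbers. -/
/-!
Since the Cantor space is zero-dimensional and second countable, the open set
`(F 0 ∪ … ∪ F (n-1))ᶜ` is a countable disjoint union of clopen sets, so `⋃ n, F n` is a countable
disjoint union of closed sets. By Cantor–Bendixson each of these is a countable set plus a perfect
set; the countable part is cut into points, and a nonempty perfect subset `C` of the Cantor space
is homeomorphic to the Cantor space (Brouwer). For the latter, split `C` repeatedly in two halves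
according to the value of the first coordinate that is not constant on the current piece; since
`C` is perfect, both halves are always nonempty, and the branches of this binary tree of closed
sets correspond to the points of `C`. So every piece is a point or a Cantor set.
-/

open Set Function Topology TopologicalSpace

section Decomposition

variable {α : Type*} [TopologicalSpace α] [SecondCountableTopology α]

lemma IsOpen.exists_iUnion_pairwise_disjoint_isClopen
    (hB : IsTopologicalBasis {s : Set α | IsClopen s}) {U : Set α} (hU : IsOpen U) :
    ∃ W : ℕ → Set α, (∀ k, IsClopen (W k)) ∧ Pairwise (Disjoint on W) ∧ ⋃ k, W k = U := by
  obtain ⟨T, hTB, rfl⟩ := hB.open_eq_sUnion hU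
  obtain ⟨T', hT'c, hT'T, hT'U⟩ := isOpen_sUnion_countable T fun s hs => (hTB hs).isOpen
  -- `∅` is added only to make the family nonempty, so that it can be enumerated
  obtain ⟨f, hf⟩ := (hT'c.insert ∅).exists_eq_range (insert_nonempty _ _)
  have hf_clopen : ∀ k, IsClopen (f k) := by
    intro k
    rcases (hf ▸ mem_range_self k : f k ∈ insert ∅ T') with h | h
    · exact h ▸ isClopen_empty
    · exact hTB (hT'T h)
  refine ⟨disjointed f, fun k => ?_, disjoint_disjointed f, ?_⟩
  · rw [disjointed_eq_inter_compl]
    exact (hf_clopen k).inter <|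
      (finite_lt_nat k).isClopen_biInter fun j _ => (hf_clopen j).compl
  · rw [iUnion_disjointed, ← sUnion_range, ← hf, sUnion_insert, empty_union, hT'U]

lemma exists_pairwise_disjoint_isClosed_iUnion_eq
    (hB : IsTopologicalBasis {s : Set α | IsClopen s}) {F : ℕ → Set α}
    (hF : ∀ n, IsClosed (F n)) :
    ∃ K : ℕ × ℕ → Set α, (∀ p, IsClosed (K p)) ∧ Pairwise (Disjoint on K) ∧
      ⋃ p, K p = ⋃ n, F n := by
  have hO : ∀ n, IsOpen (⋂ j, ⋂ (_ : j < n), (F j)ᶜ) := fun n =>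
    (finite_lt_nat n).isOpen_biInter fun j _ => (hF j).isOpen_compl
  choose W hW_clopen hW_disj hW_union using
    fun n => (hO n).exists_iUnion_pairwise_disjoint_isClopen hB
  have hK : ∀ n, disjointed F n = ⋃ k, F n ∩ W n k := by
    intro n
    rw [← inter_iUnion, hW_union, disjointed_eq_inter_compl]
  refine ⟨fun p => F p.1 ∩ W p.1 p.2, fun p => (hF p.1).inter (hW_clopen _ _).isClosed, ?_, ?_⟩
  · rintro ⟨n, k⟩ ⟨m, l⟩ hne
    rcases eq_or_ne n m with rfl | hnm
    · have hkl : k ≠ l := fun h => hne (h ▸ rfl)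
      exact (hW_disj n hkl).mono inter_subset_right inter_subset_right
    · have : Disjoint (disjointed F n) (disjointed F m) := disjoint_disjointed F hnm
      rw [hK, hK] at this
      exact this.mono (subset_iUnion (fun k => F n ∩ W n k) k)
        (subset_iUnion (fun l => F m ∩ W m l) l)
  · rw [iUnion_prod', ← iUnion_disjointed (f := F)]
    exact iUnion_congr fun n => (hK n).symm

lemma IsClosed.exists_partition_singletons_perfect {C : Set α} (hC : IsClosed C) :
    ∃ S : Set (Set α), S.Countable ∧ S.Pairwise Disjoint ∧ ⋃₀ S = C ∧
      ∀ A ∈ S, (∃ x, A = {x}) ∨ (Perfect A ∧ A.Nonempty) := by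
  obtain ⟨V, P, hV, hP, rfl⟩ := exists_countable_union_perfect_of_isClosed hC
  refine ⟨{A | A = P ∧ A.Nonempty} ∪ (fun x => {x}) '' (V \ P), ?_, ?_, ?_, ?_⟩
  · exact ((countable_singleton P).mono fun A hA => hA.1).union ((hV.mono sdiff_subset).image _)
  · rintro _ (⟨rfl, -⟩ | ⟨x, hx, rfl⟩) _ (⟨rfl, -⟩ | ⟨y, hy, rfl⟩) hne
    · exact absurd rfl hne
    · exact disjoint_singleton_right.2 hy.2
    · exact disjoint_singleton_left.2 hx.2
    · exact disjoint_singleton.2 fun h => hne (h ▸ rfl)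
  · ext x
    constructor
    · rintro ⟨_, ⟨rfl, -⟩ | ⟨y, hy, rfl⟩, hx⟩
      · exact Or.inr hx
      · exact Or.inl (mem_singleton_iff.1 hx ▸ hy.1)
    · intro hx
      by_cases hxP : x ∈ P
      · exact ⟨P, Or.inl ⟨rfl, x, hxP⟩, hxP⟩
      · exact ⟨{x}, Or.inr ⟨x, ⟨hx.resolve_right hxP, hxP⟩, rfl⟩, rfl⟩
  · rintro _ (⟨rfl, hne⟩ | ⟨x, -, rfl⟩)
    · exact Or.inr ⟨hP, hne⟩
    · exact Or.inl ⟨x, rfl⟩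

lemma exists_partition_singletons_perfect_iUnion
    (hB : IsTopologicalBasis {s : Set α | IsClopen s}) {F : ℕ → Set α}
    (hF : ∀ n, IsClosed (F n)) :
    ∃ S : Set (Set α), S.Countable ∧ S.Pairwise Disjoint ∧ ⋃₀ S = ⋃ n, F n ∧
      ∀ A ∈ S, (∃ x, A = {x}) ∨ (Perfect A ∧ A.Nonempty) := by
  obtain ⟨K, hK_closed, hK_disj, hK_union⟩ :=
    exists_pairwise_disjoint_isClosed_iUnion_eq hB hF
  choose S hS_cnt hS_disj hS_union hS_piece using
    fun p => (hK_closed p).exists_partition_singletons_perfect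
  refine ⟨⋃ p, S p, countable_iUnion hS_cnt, ?_, ?_, ?_⟩
  · rintro A hA B hB hAB
    obtain ⟨p, hp⟩ := mem_iUnion.1 hA
    obtain ⟨q, hq⟩ := mem_iUnion.1 hB
    rcases eq_or_ne p q with rfl | hpq
    · exact hS_disj p hp hq hAB
    · exact (hK_disj hpq).mono (hS_union p ▸ subset_sUnion_of_mem hp)
        (hS_union q ▸ subset_sUnion_of_mem hq)
  · rw [sUnion_iUnion, ← hK_union]
    exact iUnion_congr hS_union
  · intro A hA
    obtain ⟨p, hp⟩ := mem_iUnion.1 hA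
    exact hS_piece p A hp

end Decomposition

lemma Preperfect.nontrivial {α : Type*} [TopologicalSpace α] {s : Set α} (hs : Preperfect s)
    (hne : s.Nonempty) : s.Nontrivial := by
  obtain ⟨x, hx⟩ := hne
  obtain ⟨y, ⟨-, hy⟩, hyx⟩ := preperfect_iff_nhds.1 hs x hx univ Filter.univ_mem
  exact ⟨y, hy, x, hx, hyx⟩

namespace CantorSpace

/-- The first coordinate on which the points of `S` do not all agree; `0` if there is none. -/
noncomputable def splitIdx (S : Set (ℕ → Bool)) : ℕ :=
  sInf {m | ∃ z ∈ S, ∃ w ∈ S, z m ≠ w m}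

lemma eq_of_lt_splitIdx {S : Set (ℕ → Bool)} {z w : ℕ → Bool} (hz : z ∈ S) (hw : w ∈ S)
    {i : ℕ} (hi : i < splitIdx S) : z i = w i :=
  not_ne_iff.1 fun h => Nat.notMem_of_lt_sInf hi ⟨z, hz, w, hw, h⟩

lemma exists_ne_at_splitIdx {S : Set (ℕ → Bool)} (hS : S.Nontrivial) :
    ∃ z ∈ S, ∃ w ∈ S, z (splitIdx S) ≠ w (splitIdx S) := by
  obtain ⟨z, hz, w, hw, hzw⟩ := hS
  obtain ⟨m, hm⟩ := Function.ne_iff.1 hzw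
  exact Nat.sInf_mem (⟨m, z, hz, w, hw, hm⟩ : {m | ∃ z ∈ S, ∃ w ∈ S, z m ≠ w m}.Nonempty)

lemma le_splitIdx {S : Set (ℕ → Bool)} (hS : S.Nontrivial) {n : ℕ}
    (hagree : ∀ z ∈ S, ∀ w ∈ S, ∀ i < n, z i = w i) : n ≤ splitIdx S := by
  obtain ⟨z, hz, w, hw, hzw⟩ := exists_ne_at_splitIdx hS
  exact not_lt.1 fun h => hzw (hagree z hz w hw _ h)

lemma inter_splitIdx_eq_nonempty {S : Set (ℕ → Bool)} (hS : S.Nontrivial) (b : Bool) :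
    (S ∩ {z | z (splitIdx S) = b}).Nonempty := by
  obtain ⟨z, hz, w, hw, hzw⟩ := exists_ne_at_splitIdx hS
  by_cases hzb : z (splitIdx S) = b
  · exact ⟨z, hz, hzb⟩
  · exact ⟨w, hw, (Bool.eq_not_of_ne hzw.symm).trans (Bool.eq_not_of_ne (Ne.symm hzb)).symm⟩

noncomputable def splitCell (C : Set (ℕ → Bool)) (σ : ℕ → Bool) : ℕ → Set (ℕ → Bool)
  | 0 => C
  | n + 1 => splitCell C σ n ∩ {z | z (splitIdx (splitCell C σ n)) = σ n}

variable {C : Set (ℕ → Bool)}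

lemma splitCell_succ (σ : ℕ → Bool) (n : ℕ) :
    splitCell C σ (n + 1) = splitCell C σ n ∩ {z | z (splitIdx (splitCell C σ n)) = σ n} :=
  rfl

lemma splitCell_succ_subset (σ : ℕ → Bool) (n : ℕ) : splitCell C σ (n + 1) ⊆ splitCell C σ n :=
  inter_subset_left

lemma isClopen_coord_eq (m : ℕ) (b : Bool) : IsClopen {z : ℕ → Bool | z m = b} :=
  (isClopen_discrete {b}).preimage (continuous_apply m)

lemma splitCell_congr {σ τ : ℕ → Bool} {n : ℕ} (h : ∀ i < n, σ i = τ i) :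
    splitCell C σ n = splitCell C τ n := by
  induction n with
  | zero => rfl
  | succ n ih =>
    rw [splitCell_succ, splitCell_succ, ih fun i hi => h i (hi.trans n.lt_succ_self),
      h n n.lt_succ_self]

lemma isClosed_splitCell (hC : IsClosed C) (σ : ℕ → Bool) (n : ℕ) :
    IsClosed (splitCell C σ n) := by
  induction n with
  | zero => exact hC
  | succ n ih => exact ih.inter (isClopen_coord_eq _ _).isClosed

lemma preperfect_splitCell (hC : Preperfect C) (σ : ℕ → Bool) (n : ℕ) :
    Preperfect (splitCell C σ n) := by
  induction n with
  | zero => exact hC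
  | succ n ih =>
    rw [splitCell_succ, inter_comm]
    exact ih.open_inter (isClopen_coord_eq _ _).isOpen

lemma splitCell_nontrivial (hC : Preperfect C) (hne : C.Nonempty) (σ : ℕ → Bool) (n : ℕ) :
    (splitCell C σ n).Nontrivial := by
  refine (preperfect_splitCell hC σ n).nontrivial ?_
  induction n with
  | zero => exact hne
  | succ n ih =>
    exact inter_splitIdx_eq_nonempty ((preperfect_splitCell hC σ n).nontrivial ih) (σ n)

lemma eq_of_mem_splitCell (hC : Preperfect C) (hne : C.Nonempty) {σ : ℕ → Bool} {n : ℕ}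
    {z w : ℕ → Bool} (hz : z ∈ splitCell C σ n) (hw : w ∈ splitCell C σ n) {i : ℕ}
    (hi : i < n) : z i = w i := by
  induction n generalizing z w i with
  | zero => exact absurd hi (Nat.not_lt_zero i)
  | succ n ih =>
    have hn : n ≤ splitIdx (splitCell C σ n) :=
      le_splitIdx (splitCell_nontrivial hC hne σ n) fun z hz w hw i hi => ih hz hw hi
    rcases (Nat.lt_succ_iff.1 (hi.trans_le (Nat.succ_le_succ hn))).lt_or_eq with hi' | rfl
    · exact eq_of_lt_splitIdx hz.1 hw.1 hi'
    · exact hz.2.trans hw.2.symm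

lemma eq_of_forall_mem_splitCell {σ τ : ℕ → Bool} {x : ℕ → Bool}
    (hσ : ∀ n, x ∈ splitCell C σ n) (hτ : ∀ n, x ∈ splitCell C τ n) : σ = τ := by
  suffices ∀ n, ∀ i < n, σ i = τ i from funext fun i => this (i + 1) i i.lt_succ_self
  intro n
  induction n with
  | zero => exact fun i hi => absurd hi (Nat.not_lt_zero i)
  | succ n ih =>
    intro i hi
    rcases Nat.lt_succ_iff_lt_or_eq.1 hi with hi | rfl
    · exact ih i hi
    · have hσi : x (splitIdx (splitCell C σ i)) = σ i := (hσ (i + 1)).2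
      have hτi : x (splitIdx (splitCell C τ i)) = τ i := (hτ (i + 1)).2
      rw [← hσi, ← hτi, splitCell_congr ih]

/-- The cells `splitCell C σ n` of the branch `σ` followed by `x`, built without knowing `σ`. -/
noncomputable def pointCell (C : Set (ℕ → Bool)) (x : ℕ → Bool) : ℕ → Set (ℕ → Bool)
  | 0 => C
  | n + 1 => pointCell C x n ∩ {z | z (splitIdx (pointCell C x n)) = x (splitIdx (pointCell C x n))}

lemma exists_forall_mem_splitCell {x : ℕ → Bool} (hx : x ∈ C) :
    ∃ σ, ∀ n, x ∈ splitCell C σ n := by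
  let σ n := x (splitIdx (pointCell C x n))
  have hcell : ∀ n, splitCell C σ n = pointCell C x n := by
    intro n
    induction n with
    | zero => rfl
    | succ n ih => rw [splitCell_succ, ih]; rfl
  refine ⟨σ, fun n => ?_⟩
  rw [hcell]
  induction n with
  | zero => exact hx
  | succ n ih => exact ⟨ih, rfl⟩

theorem nonempty_homeomorph_of_perfect (hC : Perfect C) (hne : C.Nonempty) :
    Nonempty (C ≃ₜ (ℕ → Bool)) := by
  have hpoint (σ : ℕ → Bool) : (⋂ n, splitCell C σ n).Nonempty :=
    IsCompact.nonempty_iInter_of_sequence_nonempty_isCompact_isClosed _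
      (splitCell_succ_subset σ) (fun n => (splitCell_nontrivial hC.acc hne σ n).nonempty)
      hC.closed.isCompact (isClosed_splitCell hC.closed σ)
  choose g hg using hpoint
  simp only [mem_iInter] at hg
  have hg_cont : Continuous g := by
    refine continuous_pi fun i => IsLocallyConstant.continuous <|
      (IsLocallyConstant.iff_exists_open _).2 fun σ => ⟨PiNat.cylinder σ (i + 1),
        PiNat.isOpen_cylinder _ σ _, PiNat.self_mem_cylinder σ _, fun τ hτ => ?_⟩
    have hτσ : g τ ∈ splitCell C σ (i + 1) :=
      splitCell_congr (PiNat.mem_cylinder_iff.1 hτ) ▸ hg τ (i + 1)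
    exact eq_of_mem_splitCell hC.acc hne hτσ (hg σ (i + 1)) i.lt_succ_self
  have hg_inj : Injective g := fun σ τ h => eq_of_forall_mem_splitCell (hg σ) (h ▸ hg τ)
  have hg_range : ∀ x ∈ C, ∃ σ, g σ = x := by
    intro x hx
    obtain ⟨σ, hσ⟩ := exists_forall_mem_splitCell hx
    exact ⟨σ, funext fun i =>
      eq_of_mem_splitCell hC.acc hne (hg σ (i + 1)) (hσ (i + 1)) i.lt_succ_self⟩
  let e : (ℕ → Bool) ≃ C := Equiv.ofBijective (fun σ => ⟨g σ, hg σ 0⟩)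
    ⟨fun σ τ h => hg_inj (congrArg Subtype.val h),
      fun ⟨x, hx⟩ => (hg_range x hx).imp fun σ hσ => Subtype.ext hσ⟩
  exact ⟨(Continuous.homeoOfEquivCompactToT2 (f := e) (hg_cont.subtype_mk _)).symm⟩

end CantorSpace

/-- Every Fσ subset `X` of the Cantor space `ℕ → Bool` is the union of a
countable pairwise disjoint family of sets, each closed in `X`, such that each
of them (with the subspace topology) is homeomorphic to a one-point space, to
the Cantor space, or to the space of irrational numbers. -/
theorem fsigma_partition_into_canonical_pieces (X : Set (ℕ → Bool))
    (hX : ∃ F : ℕ → Set (ℕ → Bool), (∀ n, IsClosed (F n)) ∧ X = ⋃ n, F n) :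
    ∃ S : Set (Set (ℕ → Bool)),
      S.Countable ∧
      (∀ A ∈ S, A ⊆ X) ∧
      S.Pairwise Disjoint ∧
      ⋃₀ S = X ∧
      (∀ A ∈ S, IsClosed (Subtype.val ⁻¹' A : Set ↥X)) ∧
      (∀ A ∈ S,
        Nonempty (↥A ≃ₜ Unit) ∨
        Nonempty (↥A ≃ₜ (ℕ → Bool)) ∨
        Nonempty (↥A ≃ₜ {x : ℝ // Irrational x})) := by
  obtain ⟨F, hF, rfl⟩ := hX
  obtain ⟨S, hS_cnt, hS_disj, hS_union, hS_piece⟩ :=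
    exists_partition_singletons_perfect_iUnion isTopologicalBasis_isClopen hF
  have hS_closed : ∀ A ∈ S, IsClosed A := fun A hA => by
    rcases hS_piece A hA with ⟨x, rfl⟩ | ⟨hA_perf, -⟩
    exacts [isClosed_singleton, hA_perf.closed]
  refine ⟨S, hS_cnt, fun A hA => hS_union ▸ subset_sUnion_of_mem hA, hS_disj, hS_union,
    fun A hA => (hS_closed A hA).preimage continuous_subtype_val, fun A hA => ?_⟩
  rcases hS_piece A hA with ⟨x, rfl⟩ | ⟨hA_perf, hA_ne⟩
  · exact Or.inl ⟨Homeomorph.homeomorphOfUnique _ _⟩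
  · exact Or.inr (Or.inl (CantorSpace.nonempty_homeomorph_of_perfect hA_perf hA_ne))
end

section
/- The Cantor space is h-homogeneous: every nonempty clopen subset of the Cantor space, with the subspace topology, is homeomorphic to the Cantor space. -/
open Set

/-- Any equiv between discrete spaces is a homeomorphism. -/
def discHomeo {X Y : Type*} [TopologicalSpace X] [TopologicalSpace Y]
    [DiscreteTopology X] [DiscreteTopology Y] (e : X ≃ Y) : X ≃ₜ Y :=
  ⟨e, continuous_of_discreteTopology, continuous_of_discreteTopology⟩

/-- Prepending a bit is a homeomorphism `Bool × C ≃ₜ C`. -/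
def consHomeo : Bool × (ℕ → Bool) ≃ₜ (ℕ → Bool) where
  toFun p n := Nat.casesOn n p.1 (fun k => p.2 k)
  invFun x := (x 0, fun n => x (n + 1))
  left_inv p := rfl
  right_inv x := funext fun n => by cases n <;> rfl
  continuous_toFun := continuous_pi fun n => by
    cases n with
    | zero => exact continuous_fst
    | succ k => exact (continuous_apply k).comp continuous_snd
  continuous_invFun :=
    (continuous_apply 0).prodMk (continuous_pi fun n => continuous_apply (n + 1))

/-- `Bool × X ≃ₜ X ⊕ X`. -/
def boolSplit (X : Type) [TopologicalSpace X] : Bool × X ≃ₜ X ⊕ X :=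
  ((discHomeo (Equiv.boolEquivPUnitSumPUnit : Bool ≃ PUnit.{1} ⊕ PUnit.{1})).prodCongr
      (Homeomorph.refl _)).trans <|
    (Homeomorph.sumProdDistrib).trans <|
      Homeomorph.sumCongr (Homeomorph.punitProd _) (Homeomorph.punitProd _)

/-- `Fin 1 × C ≃ₜ C`. -/
def finOneProd : Fin 1 × (ℕ → Bool) ≃ₜ (ℕ → Bool) :=
  ((discHomeo (Equiv.equivPUnit (Fin 1) : Fin 1 ≃ PUnit.{1})).prodCongr
    (Homeomorph.refl _)).trans (Homeomorph.punitProd _)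

theorem finProdCantor (k : ℕ) : Nonempty (Fin (k + 1) × (ℕ → Bool) ≃ₜ (ℕ → Bool)) := by
  induction k with
  | zero => exact ⟨finOneProd⟩
  | succ k ih =>
    obtain ⟨e⟩ := ih
    have e1 : Fin (k + 2) × (ℕ → Bool) ≃ₜ (Fin (k + 1) ⊕ Fin 1) × (ℕ → Bool) :=
      (discHomeo (finSumFinEquiv (m := k + 1) (n := 1)).symm).prodCongr (Homeomorph.refl _)
    have e2 : (Fin (k + 1) ⊕ Fin 1) × (ℕ → Bool) ≃ₜ
        (Fin (k + 1) × (ℕ → Bool)) ⊕ (Fin 1 × (ℕ → Bool)) := Homeomorph.sumProdDistrib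
    have e3 : (Fin (k + 1) × (ℕ → Bool)) ⊕ (Fin 1 × (ℕ → Bool)) ≃ₜ
        (ℕ → Bool) ⊕ (ℕ → Bool) := Homeomorph.sumCongr e finOneProd
    exact ⟨e1.trans <| e2.trans <| e3.trans <| (boolSplit _).symm.trans consHomeo⟩

def splitFun (n : ℕ) (x : ℕ → Bool) : (Fin n → Bool) × (ℕ → Bool) :=
  (fun i => x i, fun k => x (k + n))

def unsplitFun (n : ℕ) (p : (Fin n → Bool) × (ℕ → Bool)) (k : ℕ) : Bool :=
  if h : k < n then p.1 ⟨k, h⟩ else p.2 (k - n)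

/-- Splitting a sequence at position `n`. -/
def splitHomeo (n : ℕ) : (ℕ → Bool) ≃ₜ (Fin n → Bool) × (ℕ → Bool) where
  toFun := splitFun n
  invFun := unsplitFun n
  left_inv x := by
    funext k
    unfold unsplitFun splitFun
    by_cases h : k < n
    · simp [h]
    · simp only [h, dif_neg, not_false_iff]
      congr 1
      omega
  right_inv p := by
    unfold unsplitFun splitFun
    refine Prod.ext ?_ ?_
    · funext i
      simp [i.isLt]
    · funext k
      have h : ¬ k + n < n := by omega
      simp [h]
  continuous_toFun :=
    (continuous_pi (fun (i : Fin n) => continuous_apply (i : ℕ))).prodMk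
      (continuous_pi fun k => continuous_apply (k + n))
  continuous_invFun := continuous_pi fun k => by
    unfold unsplitFun
    by_cases h : k < n
    · simp only [h, dif_pos]
      exact (continuous_apply _).comp continuous_fst
    · simp only [h, dif_neg, not_false_iff]
      exact (continuous_apply _).comp continuous_snd

theorem splitHomeo_apply (n : ℕ) (x : ℕ → Bool) :
    splitHomeo n x = splitFun n x := rfl

theorem splitHomeo_symm_apply (n : ℕ) (p : (Fin n → Bool) × (ℕ → Bool)) (k : ℕ) :
    (splitHomeo n).symm p k = if h : k < n then p.1 ⟨k, h⟩ else p.2 (k - n) := rfl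

/-- Membership in a clopen subset of Cantor space depends on finitely many coordinates. -/
theorem clopen_dep (U : Set (ℕ → Bool)) (hU : IsClopen U) :
    ∃ n : ℕ, ∀ x ∈ U, ∀ y : ℕ → Bool, (∀ i < n, y i = x i) → y ∈ U := by
  classical
  have hcov : ∀ x ∈ U, ∃ I : Finset ℕ, {y : ℕ → Bool | ∀ i ∈ I, y i = x i} ⊆ U := by
    intro x hx
    obtain ⟨I, u, h1, h2⟩ := isOpen_pi_iff.mp hU.isOpen x hx
    exact ⟨I, fun y hy => h2 fun i hi => by
      rw [Finset.mem_coe] at hi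
      rw [hy i hi]; exact (h1 i hi).2⟩
  choose! I hI using hcov
  have hVopen : ∀ x : ℕ → Bool, IsOpen {y : ℕ → Bool | ∀ i ∈ I x, y i = x i} := by
    intro x
    have : {y : ℕ → Bool | ∀ i ∈ I x, y i = x i}
        = (↑(I x) : Set ℕ).pi (fun i => {x i}) := by
      ext y; simp [Set.mem_pi]
    rw [this]
    exact isOpen_set_pi (Finset.finite_toSet _) fun a _ => isOpen_discrete _
  have hcomp : IsCompact U := hU.isClosed.isCompact
  obtain ⟨b, hbU, hbfin, hcover⟩ :=
    hcomp.elim_finite_subcover_image (fun x _ => hVopen x)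
      (fun x hx => mem_iUnion₂.mpr ⟨x, hx, fun i _ => rfl⟩)
  set S : Finset ℕ := hbfin.toFinset.biUnion I with hS
  refine ⟨S.sup id + 1, fun x hx y hy => ?_⟩
  obtain ⟨z, hz, hxz⟩ := mem_iUnion₂.mp (hcover hx)
  refine hI z (hbU hz) ?_
  intro i hi
  have hiS : i ∈ S := Finset.mem_biUnion.mpr ⟨z, hbfin.mem_toFinset.mpr hz, hi⟩
  have : i < S.sup id + 1 := Nat.lt_succ_of_le (Finset.le_sup (f := id) hiS)
  rw [hy i this]
  exact hxz i hi

/-- The Cantor space `ℕ → Bool` is h-homogeneous: every nonempty clopen subset,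
with the subspace topology, is homeomorphic to the Cantor space. -/
theorem cantor_hHomogeneous (U : Set (ℕ → Bool)) (hU : IsClopen U)
    (hne : U.Nonempty) :
    Nonempty (↥U ≃ₜ (ℕ → Bool)) := by
  classical
  obtain ⟨n, hn⟩ := clopen_dep U hU
  have himg : (splitHomeo n) '' U =
      ((fun x => (splitHomeo n x).1) '' U) ×ˢ (univ : Set (ℕ → Bool)) := by
    ext p
    constructor
    · rintro ⟨u, hu, rfl⟩
      exact ⟨⟨u, hu, rfl⟩, mem_univ _⟩
    · rintro ⟨⟨u, hu, hus⟩, -⟩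
      refine ⟨(splitHomeo n).symm p, ?_, (splitHomeo n).apply_symm_apply p⟩
      refine hn u hu _ fun i hi => ?_
      have h1 : (splitHomeo n).symm p i = p.1 ⟨i, hi⟩ := by
        rw [splitHomeo_symm_apply, dif_pos hi]
      have h2 : u i = p.1 ⟨i, hi⟩ := by
        have h3 := congrFun hus ⟨i, hi⟩
        simpa [splitHomeo_apply, splitFun] using h3
      rw [h1, ← h2]
  set F : Set (Fin n → Bool) := (fun x => (splitHomeo n x).1) '' U with hF
  haveI : Fintype ↥F := (F.toFinite).fintype
  have hFne : Nonempty ↥F := by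
    obtain ⟨u, hu⟩ := hne
    exact ⟨⟨(splitHomeo n u).1, u, hu, rfl⟩⟩
  obtain ⟨k, hk⟩ : ∃ k, Fintype.card ↥F = k + 1 :=
    Nat.exists_eq_succ_of_ne_zero Fintype.card_ne_zero
  have eF : ↥F ≃ Fin (k + 1) := (Fintype.equivFin ↥F).trans (finCongr hk)
  obtain ⟨ef⟩ := finProdCantor k
  have e1 : ↥U ≃ₜ ↥(F ×ˢ (univ : Set (ℕ → Bool))) :=
    ((splitHomeo n).image U).trans (Homeomorph.setCongr himg)
  have e2 : ↥(F ×ˢ (univ : Set (ℕ → Bool))) ≃ₜ ↥F × (ℕ → Bool) :=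
    (Homeomorph.Set.prod F univ).trans
      ((Homeomorph.refl _).prodCongr (Homeomorph.Set.univ _))
  have e3 : ↥F × (ℕ → Bool) ≃ₜ Fin (k + 1) × (ℕ → Bool) :=
    (discHomeo eF).prodCongr (Homeomorph.refl _)
  exact ⟨e1.trans <| e2.trans <| e3.trans ef⟩
end

section
/- The space of irrational numbers is h-homogeneous: every nonempty clopen subset of the space of irrational numbers, with the subspace topology, is homeomorphic to the space of irrational numbers. -/
/-!
Cut `U` into maximal dyadic cells: for `y ∈ U` take the least `n` such that every irrational `z`
with `⌊z * 2 ^ n⌋ = ⌊y * 2 ^ n⌋` lies in `U`. Minimality makes these cells pairwise disjoint, and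
`z ↦ fract (z * 2 ^ n)` identifies each with `J = (0, 1) \ ℚ`, so `U ≃ₜ S × J` for a countable,
nonempty, discrete `S`. The irrationals are `ℤ × J` via `x ↦ (⌊x⌋, fract x)`, and the first step
of the continued fraction expansion, `x ↦ (⌊x⁻¹⌋, fract x⁻¹)`, gives `J ≃ₜ ℕ⁺ × J`; hence
`S × J ≃ₜ (S × ℕ⁺) × J ≃ₜ ℤ × J`.
-/

open Set Filter Topology

local notation "𝕀" => {x : ℝ // Irrational x}

theorem continuousAt_floor_of_ne {α : Type*} [Ring α] [LinearOrder α] [FloorRing α]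
    [TopologicalSpace α] [OrderClosedTopology α] {x : α} (hx : x ≠ ⌊x⌋) :
    ContinuousAt (Int.floor : α → ℤ) x :=
  (tendsto_pure.2 <| mem_of_superset
    (Ioo_mem_nhds ((Int.floor_le x).lt_of_ne hx.symm) (Int.lt_floor_add_one x))
    fun _ hy => Int.floor_eq_on_Ico _ _ ⟨hy.1.le, hy.2⟩).mono_right (pure_le_nhds _)

variable {X : Type*} [TopologicalSpace X] {f : X → ℝ}

theorem Continuous.floor_of_irrational (hf : Continuous f) (hirr : ∀ x, Irrational (f x)) :
    Continuous fun x => ⌊f x⌋ :=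
  continuous_iff_continuousAt.2 fun x =>
    (continuousAt_floor_of_ne ((hirr x).ne_int _)).comp hf.continuousAt

theorem Continuous.fract_of_irrational (hf : Continuous f) (hirr : ∀ x, Irrational (f x)) :
    Continuous fun x => Int.fract (f x) :=
  continuous_iff_continuousAt.2 fun x =>
    (continuousAt_fract ((hirr x).ne_int _)).comp hf.continuousAt

theorem IsLocallyConstant.continuous_piecewise {ι Y : Type*} [TopologicalSpace Y] {g : X → ι}
    (hg : IsLocallyConstant g) {F : ι → X → Y} (hF : ∀ i, Continuous (F i)) :
    Continuous fun x => F (g x) x :=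
  continuous_iff_continuousAt.2 fun x =>
    (hF (g x)).continuousAt.congr ((hg.eventually_eq x).mono fun y hy => by simp only [hy])

def unitIrrationals : Set ℝ := {x | Irrational x} ∩ Ioo 0 1

theorem Irrational.fract_mem_unitIrrationals {x : ℝ} (hx : Irrational x) :
    Int.fract x ∈ unitIrrationals :=
  ⟨Int.self_sub_floor x ▸ hx.sub_intCast ⌊x⌋, Int.fract_pos.2 (hx.ne_int _), Int.fract_lt_one x⟩

theorem floor_intCast_add_of_mem_unitIrrationals (k : ℤ) {t : ℝ} (ht : t ∈ unitIrrationals) :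
    ⌊(k : ℝ) + t⌋ = k := by
  rw [Int.floor_intCast_add, Int.floor_eq_zero_iff.2 ⟨ht.2.1.le, ht.2.2⟩, add_zero]

theorem fract_intCast_add_of_mem_unitIrrationals (k : ℤ) {t : ℝ} (ht : t ∈ unitIrrationals) :
    Int.fract ((k : ℝ) + t) = t := by
  rw [Int.fract_intCast_add, Int.fract_eq_self.2 ⟨ht.2.1.le, ht.2.2⟩]

noncomputable def floorFractHomeomorph : 𝕀 ≃ₜ ℤ × unitIrrationals where
  toFun x := (⌊(x : ℝ)⌋, ⟨Int.fract (x : ℝ), x.2.fract_mem_unitIrrationals⟩)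
  invFun p := ⟨p.1 + p.2, p.2.2.1.intCast_add p.1⟩
  left_inv x := Subtype.ext (Int.floor_add_fract (x : ℝ))
  right_inv := fun ⟨k, t⟩ => Prod.ext (floor_intCast_add_of_mem_unitIrrationals k t.2)
    (Subtype.ext (fract_intCast_add_of_mem_unitIrrationals k t.2))
  continuous_toFun := (continuous_subtype_val.floor_of_irrational fun x => x.2).prodMk
    ((continuous_subtype_val.fract_of_irrational fun x => x.2).subtype_mk _)
  continuous_invFun := continuous_prod_of_discrete_left.2 fun k =>
    (by fun_prop : Continuous fun t : unitIrrationals => (k : ℝ) + t).subtype_mk _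

noncomputable def invFloorFractHomeomorph :
    unitIrrationals ≃ₜ Ioi (0 : ℤ) × unitIrrationals where
  toFun x := (⟨⌊(x : ℝ)⁻¹⌋, Int.floor_pos.2 (one_lt_inv₀ x.2.2.1 |>.2 x.2.2.2).le⟩,
    ⟨Int.fract (x : ℝ)⁻¹, x.2.1.inv.fract_mem_unitIrrationals⟩)
  invFun p := ⟨((p.1 : ℤ) + (p.2 : ℝ))⁻¹, (p.2.2.1.intCast_add p.1).inv, by
    have h1 : (1 : ℝ) ≤ p.1 := by exact_mod_cast p.1.2
    have h2 : (0 : ℝ) < p.2 := p.2.2.2.1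
    exact ⟨by positivity, inv_lt_one_of_one_lt₀ (by linarith)⟩⟩
  left_inv x := Subtype.ext (by simp only [Int.floor_add_fract, inv_inv])
  right_inv := fun ⟨k, t⟩ => by
    simp only [inv_inv, floor_intCast_add_of_mem_unitIrrationals k t.2,
      fract_intCast_add_of_mem_unitIrrationals k t.2]
  continuous_toFun := by
    have hinv : Continuous fun x : unitIrrationals => (x : ℝ)⁻¹ :=
      continuous_subtype_val.inv₀ fun x => x.2.2.1.ne'
    exact ((hinv.floor_of_irrational fun x => x.2.1.inv).subtype_mk _).prodMk
      ((hinv.fract_of_irrational fun x => x.2.1.inv).subtype_mk _)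
  continuous_invFun := continuous_prod_of_discrete_left.2 fun k =>
    ((by fun_prop : Continuous fun t : unitIrrationals => (k : ℝ) + t).inv₀ fun t => by
      have h1 : (1 : ℝ) ≤ k := by exact_mod_cast k.2
      have h2 : (0 : ℝ) < t := t.2.2.1
      positivity).subtype_mk _

theorem Irrational.mul_two_pow {x : ℝ} (hx : Irrational x) (n : ℕ) : Irrational (x * 2 ^ n) := by
  simpa using hx.mul_natCast (m := 2 ^ n) (by positivity)

theorem floor_mul_two_pow_eq_of_le {a b : ℝ} {m n : ℕ} (hmn : m ≤ n)
    (h : ⌊a * 2 ^ n⌋ = ⌊b * 2 ^ n⌋) : ⌊a * 2 ^ m⌋ = ⌊b * 2 ^ m⌋ := by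
  have key : ∀ c : ℝ, ⌊c * 2 ^ m⌋ = ⌊c * 2 ^ n⌋ / ((2 ^ (n - m) : ℕ) : ℤ) := fun c => by
    rw [← Int.floor_div_natCast, ← pow_mul_pow_sub (2 : ℝ) hmn]
    push_cast
    field_simp
  rw [key, key b, h]

def dyadicCell (n : ℕ) (y : 𝕀) : Set 𝕀 := {z | ⌊(z : ℝ) * 2 ^ n⌋ = ⌊(y : ℝ) * 2 ^ n⌋}

theorem dyadicCell_eq_of_mem {n : ℕ} {y z : 𝕀} (hz : z ∈ dyadicCell n y) :
    dyadicCell n z = dyadicCell n y := by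
  ext w
  exact Eq.congr_right hz

theorem dyadicCell_subset_of_le {m n : ℕ} (hmn : m ≤ n) (y : 𝕀) :
    dyadicCell n y ⊆ dyadicCell m y := fun _ => floor_mul_two_pow_eq_of_le hmn

theorem isOpen_dyadicCell (n : ℕ) (y : 𝕀) : IsOpen (dyadicCell n y) :=
  (isOpen_discrete {⌊(y : ℝ) * 2 ^ n⌋}).preimage
    ((continuous_subtype_val.mul continuous_const).floor_of_irrational fun z => z.2.mul_two_pow n)

theorem exists_dyadicCell_subset {U : Set 𝕀} (hU : IsOpen U) {y : 𝕀} (hy : y ∈ U) :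
    ∃ n, dyadicCell n y ⊆ U := by
  obtain ⟨ε, hε, hball⟩ := Metric.isOpen_iff.1 hU y hy
  obtain ⟨n, hn⟩ := exists_pow_lt_of_lt_one hε (by norm_num : (1 / 2 : ℝ) < 1)
  refine ⟨n, fun z hz => hball ?_⟩
  have h := Int.abs_sub_lt_one_of_floor_eq_floor hz
  rw [← sub_mul, abs_mul, abs_of_pos (by positivity : (0 : ℝ) < 2 ^ n)] at h
  rw [Metric.mem_ball, Subtype.dist_eq, Real.dist_eq]
  calc |(z : ℝ) - y| < 1 / 2 ^ n := by rwa [lt_div_iff₀ (by positivity)]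
    _ = (1 / 2) ^ n := by rw [div_pow, one_pow]
    _ < ε := hn

section DyadicDecomposition

variable {U : Set 𝕀}

noncomputable def dyadicLevel (U : Set 𝕀) (y : 𝕀) : ℕ := sInf {n | dyadicCell n y ⊆ U}

theorem dyadicCell_dyadicLevel_subset (hU : IsOpen U) {y : 𝕀} (hy : y ∈ U) :
    dyadicCell (dyadicLevel U y) y ⊆ U :=
  Nat.sInf_mem (exists_dyadicCell_subset hU hy)

theorem dyadicLevel_eq_of_mem (hU : IsOpen U) {y z : 𝕀} (hy : y ∈ U)
    (hz : z ∈ dyadicCell (dyadicLevel U y) y) : dyadicLevel U z = dyadicLevel U y := by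
  have hcell := dyadicCell_eq_of_mem hz
  have hzU : z ∈ U := dyadicCell_dyadicLevel_subset hU hy hz
  refine le_antisymm (Nat.sInf_le (show dyadicCell _ z ⊆ U from
    hcell ▸ dyadicCell_dyadicLevel_subset hU hy)) ?_
  by_contra! hlt
  have hz' : z ∈ dyadicCell (dyadicLevel U z) y := dyadicCell_subset_of_le hlt.le y hz
  exact Nat.notMem_of_lt_sInf hlt
    (show dyadicCell _ y ⊆ U from
      (dyadicCell_eq_of_mem hz') ▸ dyadicCell_dyadicLevel_subset hU hzU)

noncomputable def dyadicIndex (U : Set 𝕀) (y : 𝕀) : ℕ × ℤ :=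
  (dyadicLevel U y, ⌊(y : ℝ) * 2 ^ dyadicLevel U y⌋)

theorem isLocallyConstant_dyadicIndex (hU : IsOpen U) :
    IsLocallyConstant fun y : U => dyadicIndex U y := by
  refine (IsLocallyConstant.iff_eventually_eq _).2 fun y => ?_
  have hnhds : {z : U | (z : 𝕀) ∈ dyadicCell (dyadicLevel U y) y} ∈ 𝓝 y :=
    ((isOpen_dyadicCell _ _).preimage continuous_subtype_val).mem_nhds (rfl : _ = _)
  filter_upwards [hnhds] with z hz
  have hlevel := dyadicLevel_eq_of_mem hU y.2 hz
  simp only [dyadicIndex, hlevel]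
  exact Prod.ext rfl hz

noncomputable def dyadicPoint (n : ℕ) (k : ℤ) (t : unitIrrationals) : 𝕀 :=
  ⟨(k + t) / 2 ^ n, by simpa using (t.2.1.intCast_add k).div_natCast (m := 2 ^ n) (by positivity)⟩

theorem continuous_dyadicPoint (n : ℕ) (k : ℤ) : Continuous (dyadicPoint n k) :=
  (by fun_prop : Continuous fun t : unitIrrationals => ((k : ℝ) + t) / 2 ^ n).subtype_mk _

theorem dyadicPoint_mul_two_pow (n : ℕ) (k : ℤ) (t : unitIrrationals) :
    (dyadicPoint n k t : ℝ) * 2 ^ n = k + t :=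
  div_mul_cancel₀ _ (by positivity)

def dyadicIndices (U : Set 𝕀) : Set (ℕ × ℤ) := dyadicIndex U '' U

theorem dyadicPoint_mem_and_dyadicIndex_eq (hU : IsOpen U) {n : ℕ} {k : ℤ}
    (hk : (n, k) ∈ dyadicIndices U) (t : unitIrrationals) :
    dyadicPoint n k t ∈ U ∧ dyadicIndex U (dyadicPoint n k t) = (n, k) := by
  obtain ⟨y, hy, hyk⟩ := hk
  obtain ⟨rfl, rfl⟩ := Prod.mk.inj hyk
  have hfloor : ⌊(dyadicPoint (dyadicLevel U y) ⌊(y : ℝ) * 2 ^ dyadicLevel U y⌋ t : ℝ) *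
      2 ^ dyadicLevel U y⌋ = ⌊(y : ℝ) * 2 ^ dyadicLevel U y⌋ := by
    rw [dyadicPoint_mul_two_pow, floor_intCast_add_of_mem_unitIrrationals _ t.2]
  refine ⟨dyadicCell_dyadicLevel_subset hU hy hfloor, ?_⟩
  rw [dyadicIndex, dyadicLevel_eq_of_mem hU hy hfloor, hfloor]

noncomputable def dyadicHomeomorph (hU : IsOpen U) : U ≃ₜ dyadicIndices U × unitIrrationals where
  toFun y := (⟨dyadicIndex U y, y, y.2, rfl⟩,
    ⟨Int.fract ((y : ℝ) * 2 ^ dyadicLevel U y), (y.1.2.mul_two_pow _).fract_mem_unitIrrationals⟩)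
  invFun p :=
    ⟨dyadicPoint p.1.1.1 p.1.1.2 p.2, (dyadicPoint_mem_and_dyadicIndex_eq hU p.1.2 p.2).1⟩
  left_inv y := Subtype.ext <| Subtype.ext <| by
    simp only [dyadicPoint, dyadicIndex, Int.floor_add_fract]
    exact mul_div_cancel_right₀ _ (by positivity)
  right_inv := fun ⟨⟨(n, k), hk⟩, t⟩ => by
    have hidx := (dyadicPoint_mem_and_dyadicIndex_eq hU hk t).2
    have hlevel : dyadicLevel U (dyadicPoint n k t) = n := congrArg Prod.fst hidx
    refine Prod.ext (Subtype.ext hidx) (Subtype.ext ?_)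
    simp only [hlevel, dyadicPoint_mul_two_pow, fract_intCast_add_of_mem_unitIrrationals _ t.2]
  continuous_toFun := by
    have hidx := isLocallyConstant_dyadicIndex hU
    have hval : Continuous fun y : U => (y : ℝ) := continuous_subtype_val.comp continuous_subtype_val
    refine (hidx.continuous.subtype_mk _).prodMk ?_
    exact (hidx.comp Prod.fst).continuous_piecewise (F := fun n (y : U) =>
      (⟨_, (y.1.2.mul_two_pow n).fract_mem_unitIrrationals⟩ : unitIrrationals)) fun n =>
      ((hval.mul continuous_const).fract_of_irrational fun y => y.1.2.mul_two_pow n).subtype_mk _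
  continuous_invFun := continuous_prod_of_discrete_left.2 fun i =>
    (continuous_dyadicPoint i.1.1 i.1.2).subtype_mk _

end DyadicDecomposition

theorem nonempty_prod_unitIrrationals_homeomorph (ι : Type*) [TopologicalSpace ι]
    [DiscreteTopology ι] [Countable ι] [Nonempty ι] :
    Nonempty (ι × unitIrrationals ≃ₜ 𝕀) := by
  obtain ⟨e⟩ := nonempty_equiv_of_countable (α := ι × Ioi (0 : ℤ)) (β := ℤ)
  exact ⟨(Homeomorph.prodCongr (Homeomorph.refl ι) invFloorFractHomeomorph).trans <|
    (Homeomorph.prodAssoc _ _ _).symm.trans <|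
    (Homeomorph.prodCongr e.toHomeomorphOfDiscrete (Homeomorph.refl _)).trans
    floorFractHomeomorph.symm⟩

/-- The space of irrational numbers is h-homogeneous: every nonempty clopen
subset of `{x : ℝ | Irrational x}`, with the subspace topology, is
homeomorphic to the space of irrational numbers. -/
theorem irrational_hHomogeneous (U : Set {x : ℝ // Irrational x})
    (hU : IsClopen U) (hne : U.Nonempty) :
    Nonempty (↥U ≃ₜ {x : ℝ // Irrational x}) := by
  have : Nonempty (dyadicIndices U) := (hne.image _).to_subtype
  obtain ⟨e⟩ := nonempty_prod_unitIrrationals_homeomorph (dyadicIndices U)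
  exact ⟨(dyadicHomeomorph hU.isOpen).trans e⟩
end

section
/- Every Fσ subset of the Cantor space is σ-homogeneous, and every Gδ subset of the Cantor space is σ-homogeneous; that is, each such set X is a countable union of subspaces that are closed in X and h-homogeneous in the subspace topology. -/
open Set Function PiNat Topology Filter

namespace CantorScheme

variable {β α : Type*} {A : List β → Set α}

theorem exists_branch_of_mem (hcover : ∀ l, A l ⊆ ⋃ b, A (b :: l))
    (hanti : CantorScheme.Antitone A) {a : α} {x : ℕ → β} {n : ℕ} (ha : a ∈ A (res x n)) :
    ∃ y ∈ cylinder x n, ∀ m, a ∈ A (res y m) := by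
  have : Nonempty β := ⟨x 0⟩
  choose! next hnext using fun l (h : a ∈ A l) => mem_iUnion.1 (hcover l h)
  -- `L k` is `res y k`, defined first so that `y k` may refer to it
  let L : ℕ → List β := fun k =>
    Nat.rec [] (fun k L => (if k < n then x k else next L) :: L) k
  let y : ℕ → β := fun k => if k < n then x k else next (L k)
  have hres : ∀ k, res y k = L k := by
    intro k
    induction k with
    | zero => rfl
    | succ k ih => rw [res_succ, ih]
  have hy : y ∈ cylinder x n := fun i hi => if_pos hi
  refine ⟨y, hy, fun m => ?_⟩
  have hmem : ∀ k, n ≤ k → a ∈ A (res y k) := by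
    intro k hk
    induction k, hk using Nat.le_induction with
    | base => rwa [res_eq_res.2 hy]
    | succ k hk ih =>
      have hyk : y k = next (res y k) := by rw [hres]; exact if_neg (Nat.not_lt.2 hk)
      rw [res_succ, hyk]
      exact hnext _ ih
  exact antitone_nat_of_succ_le (f := fun k => A (res y k)) (fun k => hanti _ _)
    (Nat.le_max_left m n) (hmem _ (Nat.le_max_right m n))

noncomputable def totalMap (htot : ∀ x : ℕ → β, (⋂ n, A (res x n)).Nonempty) (x : ℕ → β) : α :=
  (inducedMap A).2 ⟨x, htot x⟩

variable {htot : ∀ x : ℕ → β, (⋂ n, A (res x n)).Nonempty}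

theorem totalMap_mem (x : ℕ → β) (n : ℕ) : totalMap htot x ∈ A (res x n) :=
  map_mem ⟨x, htot x⟩ n

section Metric

variable [MetricSpace α]

theorem totalMap_eq_of_forall_mem (hdiam : VanishingDiam A) {a : α} {x : ℕ → β}
    (ha : ∀ n, a ∈ A (res x n)) : totalMap htot x = a := by
  refine eq_of_forall_dist_le fun ε hε => ?_
  obtain ⟨n, hn⟩ := hdiam.dist_lt ε hε x
  exact (hn _ (totalMap_mem x n) _ (ha n)).le

theorem image_totalMap_cylinder (hcover : ∀ l, A l ⊆ ⋃ b, A (b :: l))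
    (hanti : CantorScheme.Antitone A) (hdiam : VanishingDiam A) (x : ℕ → β) (n : ℕ) :
    totalMap htot '' cylinder x n = A (res x n) := by
  refine Subset.antisymm ?_ fun a ha => ?_
  · rintro _ ⟨y, hy, rfl⟩
    rw [← res_eq_res.2 hy]
    exact totalMap_mem y n
  · obtain ⟨y, hy, hya⟩ := exists_branch_of_mem hcover hanti ha
    exact ⟨y, hy, totalMap_eq_of_forall_mem hdiam hya⟩

theorem nonempty_homeomorph [TopologicalSpace β] [DiscreteTopology β] (hroot : A [] = univ)
    (hopen : ∀ l, IsOpen (A l)) (hcover : ∀ l, A l ⊆ ⋃ b, A (b :: l))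
    (hanti : CantorScheme.Antitone A) (hdisj : CantorScheme.Disjoint A)
    (hdiam : VanishingDiam A) (htot : ∀ x : ℕ → β, (⋂ n, A (res x n)).Nonempty) :
    Nonempty ((ℕ → β) ≃ₜ α) := by
  have himage := image_totalMap_cylinder (htot := htot) hcover hanti hdiam
  have hsurj : Surjective (totalMap htot) := fun a => by
    obtain ⟨b, -⟩ := mem_iUnion.1 (hcover [] (hroot ▸ mem_univ a))
    obtain ⟨y, -, hy⟩ : a ∈ totalMap htot '' cylinder (fun _ => b) 0 := by
      rw [himage, res_zero, hroot]
      exact mem_univ a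
    exact ⟨y, hy⟩
  have hinj : Injective (totalMap htot) := fun x y hxy =>
    congrArg Subtype.val (hdisj.map_injective (a₁ := ⟨x, htot x⟩) (a₂ := ⟨y, htot y⟩) hxy)
  have hcont : Continuous (totalMap htot) :=
    hdiam.map_continuous.comp (continuous_id.subtype_mk _)
  have hopenMap : IsOpenMap (totalMap htot) :=
    (isTopologicalBasis_cylinders fun _ => β).isOpenMap_iff.2 fun _ ⟨x, n, hxn⟩ =>
      hxn ▸ himage x n ▸ hopen _
  exact ⟨(Equiv.ofBijective _ ⟨hinj, hsurj⟩).toHomeomorphOfContinuousOpen hcont hopenMap⟩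

end Metric

end CantorScheme

theorem PiNat.isClopen_cylinder {E : ℕ → Type*} [∀ n, TopologicalSpace (E n)]
    [∀ n, DiscreteTopology (E n)] (x : ∀ n, E n) (n : ℕ) : IsClopen (cylinder x n) :=
  ⟨cylinder_eq_pi x n ▸ isClosed_set_pi fun _ _ => isClosed_discrete _,
    isOpen_cylinder (E := E) x n⟩

section CantorSpace

attribute [local instance] PiNat.metricSpace

theorem ediam_le_of_subset_cylinder {Z : Set (ℕ → Bool)} {S : Set Z} {x : ℕ → Bool} {n : ℕ}
    (hS : Subtype.val '' S ⊆ cylinder x n) : Metric.ediam S ≤ ENNReal.ofReal ((1 / 2) ^ n) := by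
  refine Metric.ediam_le_of_forall_dist_le fun u hu v hv => ?_
  refine mem_cylinder_iff_dist_le.1 fun i hi => ?_
  rw [hS (mem_image_of_mem _ hu) i hi, hS (mem_image_of_mem _ hv) i hi]

theorem nonempty_homeomorph_of_cylinder_scheme {β : Type*} [TopologicalSpace β]
    [DiscreteTopology β] {Z : Set (ℕ → Bool)} (A : List β → Set (ℕ → Bool))
    (hroot : Z ⊆ A []) (hopen : ∀ l, IsOpen (A l)) (hcover : ∀ l, Z ∩ A l ⊆ ⋃ b, A (b :: l))
    (hanti : CantorScheme.Antitone A) (hdisj : CantorScheme.Disjoint A)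
    (hcyl : ∀ l b, ∃ x, Z ∩ A (b :: l) ⊆ cylinder x l.length)
    (htot : ∀ x : ℕ → β, (Z ∩ ⋂ n, A (res x n)).Nonempty) :
    Nonempty ((ℕ → β) ≃ₜ Z) := by
  refine CantorScheme.nonempty_homeomorph (A := fun l => Subtype.val ⁻¹' A l)
    (eq_univ_of_forall fun u => hroot u.2) (fun l => (hopen l).preimage continuous_subtype_val)
    (fun l u hu => by simpa using hcover l ⟨u.2, hu⟩) (fun l b => preimage_mono (hanti l b))
    (fun l a b hab => (hdisj l hab).preimage _) (fun x => ?_) fun x => ?_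
  · rw [← tendsto_add_atTop_iff_nat 1]
    have hlim : Tendsto (fun n : ℕ => ENNReal.ofReal ((1 / 2 : ℝ) ^ n)) atTop (𝓝 0) := by
      simpa using ENNReal.tendsto_ofReal
        (tendsto_pow_atTop_nhds_zero_of_lt_one (r := (1 / 2 : ℝ)) (by norm_num) (by norm_num))
    refine tendsto_of_tendsto_of_tendsto_of_le_of_le tendsto_const_nhds hlim (fun _ => zero_le)
      fun n => ?_
    obtain ⟨y, hy⟩ := hcyl (res x n) (x n)
    rw [res_length] at hy
    exact ediam_le_of_subset_cylinder fun _ ⟨u, hu, huv⟩ => huv ▸ hy ⟨u.2, hu⟩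
  · obtain ⟨u, huZ, hu⟩ := htot x
    exact ⟨⟨u, huZ⟩, by simpa using hu⟩

end CantorSpace

theorem Preperfect.nontrivial_s9 {X : Type*} [TopologicalSpace X] {C : Set X} (hC : Preperfect C)
    (hne : C.Nonempty) : C.Nontrivial := by
  obtain ⟨x, hx⟩ := hne
  obtain ⟨y, ⟨-, hy⟩, hyx⟩ := preperfect_iff_nhds.1 hC x hx univ univ_mem
  exact ⟨y, hy, x, hx, hyx⟩

/-- Junk value `0` when `S` is a subsingleton. -/
noncomputable def splitIndex (S : Set (ℕ → Bool)) : ℕ :=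
  sInf {i | ∃ u ∈ S, ∃ v ∈ S, u i ≠ v i}

theorem apply_eq_of_lt_splitIndex {S : Set (ℕ → Bool)} {u v : ℕ → Bool} (hu : u ∈ S)
    (hv : v ∈ S) {i : ℕ} (hi : i < splitIndex S) : u i = v i :=
  not_not.1 fun h => Nat.notMem_of_lt_sInf hi ⟨u, hu, v, hv, h⟩

theorem Set.Nontrivial.exists_apply_splitIndex_ne {S : Set (ℕ → Bool)} (hS : S.Nontrivial) :
    ∃ u ∈ S, ∃ v ∈ S, u (splitIndex S) ≠ v (splitIndex S) := by
  obtain ⟨u, hu, v, hv, huv⟩ := hS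
  obtain ⟨i, hi⟩ := Function.ne_iff.1 huv
  exact Nat.sInf_mem (s := {i | ∃ u ∈ S, ∃ v ∈ S, u i ≠ v i}) ⟨i, u, hu, v, hv, hi⟩

def splitScheme (C : Set (ℕ → Bool)) : List Bool → Set (ℕ → Bool)
  | [] => univ
  | b :: l => splitScheme C l ∩ {u | u (splitIndex (C ∩ splitScheme C l)) = b}

theorem splitScheme_spec {C : Set (ℕ → Bool)} (hC : Preperfect C) (hne : C.Nonempty)
    (l : List Bool) : IsClopen (splitScheme C l) ∧ (C ∩ splitScheme C l).Nonempty ∧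
      ∃ x, C ∩ splitScheme C l ⊆ cylinder x l.length := by
  induction l with
  | nil => exact ⟨isClopen_univ, by simpa [splitScheme] using hne, hne.some, by simp⟩
  | cons b l ih =>
    obtain ⟨hclopen, hne, x, hx⟩ := ih
    have hS : (C ∩ splitScheme C l).Nontrivial := by
      rw [inter_comm] at hne ⊢
      exact (hC.open_inter hclopen.isOpen).nontrivial_s9 hne
    set S := C ∩ splitScheme C l
    have hlen : l.length ≤ splitIndex S := by
      obtain ⟨u, hu, v, hv, huv⟩ := hS.exists_apply_splitIndex_ne
      by_contra! h
      exact huv ((hx hu _ h).trans (hx hv _ h).symm)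
    have hchild : C ∩ splitScheme C (b :: l) = S ∩ {u | u (splitIndex S) = b} := by
      simp only [splitScheme, S, inter_assoc]
    obtain ⟨w, hw⟩ : (S ∩ {u | u (splitIndex S) = b}).Nonempty := by
      obtain ⟨u, hu, v, hv, huv⟩ := hS.exists_apply_splitIndex_ne
      by_cases hub : u (splitIndex S) = b
      · exact ⟨u, hu, hub⟩
      · refine ⟨v, hv, show v (splitIndex S) = b from ?_⟩
        revert hub huv
        cases u (splitIndex S) <;> cases v (splitIndex S) <;> cases b <;> decide
    refine ⟨hclopen.inter ((isClopen_discrete {b}).preimage (continuous_apply _)),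
      hchild ▸ ⟨w, hw⟩, w, hchild ▸ fun v hv i hi => ?_⟩
    rcases (Nat.lt_or_ge i (splitIndex S)) with h | h
    · exact apply_eq_of_lt_splitIndex hv.1 hw.1 h
    · rw [List.length_cons] at hi
      rw [show i = splitIndex S by omega, hv.2, hw.2]

theorem Perfect.nonempty_homeomorph_cantorSpace {C : Set (ℕ → Bool)} (hC : Perfect C)
    (hne : C.Nonempty) : Nonempty ((ℕ → Bool) ≃ₜ C) := by
  have hspec := splitScheme_spec hC.acc hne
  refine nonempty_homeomorph_of_cylinder_scheme (splitScheme C) (subset_univ _)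
    (fun l => (hspec l).1.isOpen)
    (fun l u hu => mem_iUnion.2 ⟨u (splitIndex (C ∩ splitScheme C l)), hu.2, rfl⟩)
    (fun l b => inter_subset_left)
    (fun l a b hab => Set.disjoint_left.2 fun u ha hb => hab (ha.2.symm.trans hb.2))
    (fun l b => ?_) fun x => ?_
  · obtain ⟨x, hx⟩ := (hspec (b :: l)).2.2
    exact ⟨x, hx.trans (cylinder_anti x (Nat.le_succ _))⟩
  · rw [inter_iInter]
    refine IsCompact.nonempty_iInter_of_sequence_nonempty_isCompact_isClosed _
      (fun n => inter_subset_inter_right C inter_subset_left) (fun n => (hspec _).2.1)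
      (hC.closed.inter (hspec _).1.isClosed).isCompact
      fun n => hC.closed.inter (hspec _).1.isClosed

namespace PiNat

variable {E : ℕ → Type*} [∀ n, TopologicalSpace (E n)] [∀ n, DiscreteTopology (E n)]
  {G : Set (∀ n, E n)} {x y : ∀ n, E n} {n : ℕ}

theorem exists_cylinder_subset (hG : IsOpen G) (hx : x ∈ G) : ∃ m, cylinder x m ⊆ G := by
  obtain ⟨_, ⟨z, m, rfl⟩, hxz, hsub⟩ :=
    (isTopologicalBasis_cylinders E).exists_subset_of_mem_open hx hG
  exact ⟨m, mem_cylinder_iff_eq.1 hxz ▸ hsub⟩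

noncomputable def entryDepth (G : Set (∀ n, E n)) (n : ℕ) (x : ∀ n, E n) : ℕ :=
  sInf {m | n ≤ m ∧ cylinder x m ⊆ G}

theorem entryDepth_spec (hG : IsOpen G) (hx : x ∈ G) :
    n ≤ entryDepth G n x ∧ cylinder x (entryDepth G n x) ⊆ G := by
  obtain ⟨m, hm⟩ := exists_cylinder_subset hG hx
  exact Nat.sInf_mem (s := {m | n ≤ m ∧ cylinder x m ⊆ G})
    ⟨max n m, le_max_left n m, (cylinder_anti x (le_max_right n m)).trans hm⟩

theorem cylinder_entryDepth_of_mem (hG : IsOpen G) (hx : x ∈ G)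
    (hy : y ∈ cylinder x (entryDepth G n x)) :
    cylinder y (entryDepth G n y) = cylinder x (entryDepth G n x) := by
  obtain ⟨hnx, hxG⟩ := entryDepth_spec (n := n) hG hx
  obtain ⟨hny, hyG⟩ := entryDepth_spec (n := n) hG (hxG hy)
  have hyx := mem_cylinder_iff_eq.1 hy
  have hle : entryDepth G n y ≤ entryDepth G n x := Nat.sInf_le ⟨hnx, hyx ▸ hxG⟩
  have hxy := mem_cylinder_iff_eq.1 (cylinder_anti y hle ((mem_cylinder_comm x y _).1 hy))
  have hge : entryDepth G n x ≤ entryDepth G n y := Nat.sInf_le ⟨hny, hxy ▸ hyG⟩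
  rwa [le_antisymm hle hge]

theorem cylinder_entryDepth_eq_or_disjoint (hG : IsOpen G) (hx : x ∈ G) (hy : y ∈ G) :
    cylinder x (entryDepth G n x) = cylinder y (entryDepth G n y) ∨
      Disjoint (cylinder x (entryDepth G n x)) (cylinder y (entryDepth G n y)) := by
  refine or_iff_not_imp_right.2 fun h => ?_
  obtain ⟨z, hzx, hzy⟩ := not_disjoint_iff.1 h
  rw [← cylinder_entryDepth_of_mem hG hx hzx, cylinder_entryDepth_of_mem hG hy hzy]

end PiNat

theorem PiNat.exists_pairwise_disjoint_cylinders_cover {α : Type*} [TopologicalSpace α]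
    [DiscreteTopology α] [Countable α] {S G : Set (ℕ → α)} (hG : IsOpen G) (hSG : S ⊆ G)
    {p : ℕ → α} (hp : p ∈ closure S) (hpG : p ∉ G) (n : ℕ) :
    ∃ (x : ℕ → ℕ → α) (m : ℕ → ℕ), (∀ k, x k ∈ S) ∧ (∀ k, n ≤ m k) ∧
      (∀ k, cylinder (x k) (m k) ⊆ G) ∧ Pairwise (Disjoint on fun k => cylinder (x k) (m k)) ∧
      S ⊆ ⋃ k, cylinder (x k) (m k) := by
  set c : (ℕ → α) → Set (ℕ → α) := fun x => cylinder x (entryDepth G n x)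
  have hcount : (c '' S).Countable := by
    refine (countable_range fun l : List α => {y | res y l.length = l}).mono ?_
    rintro _ ⟨x, -, rfl⟩
    exact ⟨res x (entryDepth G n x), by simp [c, cylinder_eq_res]⟩
  have hinf : (c '' S).Infinite := by
    intro hfin
    have hclosed : IsClosed (⋃ t ∈ c '' S, t) :=
      hfin.isClosed_biUnion fun _ ⟨x, _, ht⟩ => ht ▸ (isClopen_cylinder _ _).isClosed
    have hS : S ⊆ ⋃ t ∈ c '' S, t := fun x hx =>
      mem_biUnion (mem_image_of_mem c hx) (self_mem_cylinder x _)
    obtain ⟨_, ⟨x, hx, rfl⟩, hpx⟩ := mem_iUnion₂.1 (hclosed.closure_subset_iff.2 hS hp)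
    exact hpG ((entryDepth_spec hG (hSG hx)).2 hpx)
  have := hinf.to_subtype
  have := hcount.to_subtype
  obtain ⟨e⟩ := nonempty_equiv_of_countable (α := ℕ) (β := c '' S)
  choose x hxS hx using fun k => (e k).2
  refine ⟨x, fun k => entryDepth G n (x k), hxS, fun k => (entryDepth_spec hG (hSG (hxS k))).1,
    fun k => (entryDepth_spec hG (hSG (hxS k))).2, fun k k' hkk' => ?_, fun y hy => ?_⟩
  · refine (cylinder_entryDepth_eq_or_disjoint hG (hSG (hxS k)) (hSG (hxS k'))).resolve_left ?_
    intro h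
    exact hkk' (e.injective (Subtype.ext ((hx k).symm.trans (h.trans (hx k')))))
  · obtain ⟨k, hk⟩ := e.surjective ⟨c y, mem_image_of_mem c hy⟩
    have hyk : c (x k) = c y := (hx k).trans (congrArg Subtype.val hk)
    exact mem_iUnion.2 ⟨k, show y ∈ c (x k) from hyk ▸ self_mem_cylinder y _⟩

/-- For subsets of the zero-dimensional Cantor space this is nowhere local compactness. -/
def NowhereLocallyCompact (Z : Set (ℕ → Bool)) : Prop :=
  ∀ V : Set (ℕ → Bool), IsOpen V → IsCompact (Z ∩ V) → Z ∩ V = ∅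

theorem NowhereLocallyCompact.exists_partition {Z : Set (ℕ → Bool)}
    (hZ : NowhereLocallyCompact Z) {B G : Set (ℕ → Bool)} (hB : IsClopen B)
    (hZB : (Z ∩ B).Nonempty) (hG : IsOpen G) (hZG : Z ⊆ G) (n : ℕ) :
    ∃ P : ℕ → Set (ℕ → Bool), (∀ k, IsClopen (P k)) ∧ (∀ k, (Z ∩ P k).Nonempty) ∧
      (∀ k, P k ⊆ B ∩ G) ∧ Pairwise (Disjoint on P) ∧ Z ∩ B ⊆ ⋃ k, P k ∧
      ∀ k, ∃ x, P k ⊆ cylinder x n := by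
  obtain ⟨p, hp, hpZB⟩ : ∃ p ∈ closure (Z ∩ B), p ∉ Z ∩ B := by
    by_contra! h
    exact hZB.ne_empty (hZ B hB.isOpen (isClosed_of_closure_subset h).isCompact)
  obtain ⟨x, m, hxZB, hnm, hsub, hdisj, hcover⟩ :=
    exists_pairwise_disjoint_cylinders_cover ((hB.isOpen.inter hG).sdiff isClosed_singleton)
      (fun u hu => ⟨⟨hu.2, hZG hu.1⟩, fun hup => hpZB (by rwa [← mem_singleton_iff.1 hup])⟩)
      hp (fun h => h.2 rfl) n
  exact ⟨fun k => cylinder (x k) (m k), fun k => isClopen_cylinder _ _,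
    fun k => ⟨x k, (hxZB k).1, self_mem_cylinder _ _⟩, fun k => (hsub k).trans sdiff_subset,
    hdisj, hcover, fun k => ⟨x k, cylinder_anti _ (hnm k)⟩⟩

theorem IsGδ.nonempty_homeomorph_baireSpace {Z : Set (ℕ → Bool)} (hZ : IsGδ Z)
    (hnlc : NowhereLocallyCompact Z) (hne : Z.Nonempty) : Nonempty ((ℕ → ℕ) ≃ₜ Z) := by
  obtain ⟨O, hO, rfl⟩ := hZ.eq_iInter_nat
  choose P hclopen hne' hsub hdisj hcover hcyl using
    fun (B : {B : Set (ℕ → Bool) // IsClopen B ∧ ((⋂ n, O n) ∩ B).Nonempty}) (n : ℕ) =>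
      hnlc.exists_partition B.2.1 B.2.2 (hO n) (iInter_subset O n) n
  let T : List ℕ → {B : Set (ℕ → Bool) // IsClopen B ∧ ((⋂ n, O n) ∩ B).Nonempty} :=
    fun l => List.rec ⟨univ, isClopen_univ, by rwa [inter_univ]⟩
      (fun k l B => ⟨P B l.length k, hclopen B l.length k, hne' B l.length k⟩) l
  refine nonempty_homeomorph_of_cylinder_scheme (fun l => (T l).1) (subset_univ _)
    (fun l => (T l).2.1.isOpen) (fun l => hcover (T l) l.length)
    (fun l k => (hsub (T l) l.length k).trans inter_subset_left) (fun l => hdisj (T l) l.length)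
    (fun l k => ?_) fun x => ?_
  · obtain ⟨y, hy⟩ := hcyl (T l) l.length k
    exact ⟨y, inter_subset_right.trans hy⟩
  · obtain ⟨q, hq⟩ := IsCompact.nonempty_iInter_of_sequence_nonempty_isCompact_isClosed
      (fun n => (T (res x n)).1) (fun n => (hsub _ _ _).trans inter_subset_left)
      (fun n => (T (res x n)).2.2.mono inter_subset_right) (T (res x 0)).2.1.isClosed.isCompact
      fun n => (T _).2.1.isClosed
    rw [mem_iInter] at hq
    refine ⟨q, mem_iInter.2 fun n => ?_, mem_iInter.2 hq⟩
    -- the pieces of level `n + 1` lie in `O n`, which keeps the limit point inside `Z`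
    have hqO := hsub (T (res x n)) _ (x n) (hq (n + 1))
    rw [res_length] at hqO
    exact hqO.2

theorem hHomogeneous_of_subsingleton (Y : Type*) [TopologicalSpace Y] [Subsingleton Y] :
    HHomogeneous Y := fun _ _ ⟨u, hu⟩ =>
  ⟨(Homeomorph.setCongr (eq_univ_of_forall fun v => Subsingleton.elim u v ▸ hu)).trans
    (Homeomorph.Set.univ Y)⟩

theorem hHomogeneous_of_forall_inter {X : Type*} [TopologicalSpace X] {Z : Set X}
    (h : ∀ V K : Set X, IsOpen V → IsClosed K → Z ∩ V = Z ∩ K → (Z ∩ V).Nonempty →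
      Nonempty (↥(Z ∩ V) ≃ₜ Z)) : HHomogeneous Z := by
  intro U hU ⟨u, hu⟩
  obtain ⟨V, hV, rfl⟩ := isOpen_induced_iff.1 hU.isOpen
  obtain ⟨K, hK, hKV⟩ := isClosed_induced_iff.1 hU.isClosed
  have hZV : Subtype.val '' (Subtype.val ⁻¹' V : Set Z) = Z ∩ V := Subtype.image_preimage_coe Z V
  obtain ⟨e⟩ := h V K hV hK (by rw [← hZV, ← hKV, Subtype.image_preimage_coe])
    ⟨u, u.2, hu⟩
  exact ⟨(IsEmbedding.subtypeVal.homeomorphImage _).trans ((Homeomorph.setCongr hZV).trans e)⟩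

theorem Perfect.hHomogeneous {D : Set (ℕ → Bool)} (hD : Perfect D) : HHomogeneous D :=
  hHomogeneous_of_forall_inter fun V K hV hK hVK hne => by
    have hDV : Perfect (D ∩ V) :=
      ⟨hVK ▸ hD.closed.inter hK, inter_comm V D ▸ hD.acc.open_inter hV⟩
    obtain ⟨e₁⟩ := hDV.nonempty_homeomorph_cantorSpace hne
    obtain ⟨e₂⟩ := hD.nonempty_homeomorph_cantorSpace (hne.mono inter_subset_left)
    exact ⟨e₁.symm.trans e₂⟩

theorem IsGδ.hHomogeneous_of_nowhereLocallyCompact {Z : Set (ℕ → Bool)} (hZ : IsGδ Z)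
    (hnlc : NowhereLocallyCompact Z) : HHomogeneous Z :=
  hHomogeneous_of_forall_inter fun V K hV hK hVK hne => by
    have hZV : IsGδ (Z ∩ V) := hVK ▸ hZ.inter hK.isGδ
    have hnlcV : NowhereLocallyCompact (Z ∩ V) := fun W hW => by
      simpa only [inter_assoc] using hnlc (V ∩ W) (hV.inter hW)
    obtain ⟨e₁⟩ := hZV.nonempty_homeomorph_baireSpace hnlcV hne
    obtain ⟨e₂⟩ := hZ.nonempty_homeomorph_baireSpace hnlc (hne.mono inter_subset_left)
    exact ⟨e₁.symm.trans e₂⟩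

theorem IsClosed.exists_countable_hHomogeneous_cover {F : Set (ℕ → Bool)} (hF : IsClosed F) :
    ∃ 𝒢 : Set (Set (ℕ → Bool)), 𝒢.Countable ∧ (∀ G ∈ 𝒢, IsClosed G ∧ HHomogeneous G) ∧
      ⋃₀ 𝒢 = F := by
  obtain ⟨V, D, hV, hD, rfl⟩ := exists_countable_union_perfect_of_isClosed hF
  refine ⟨insert D (singleton '' V), (hV.image _).insert D, ?_, ?_⟩
  · rintro _ (rfl | ⟨v, -, rfl⟩)
    · exact ⟨hD.closed, hD.hHomogeneous⟩
    · exact ⟨isClosed_singleton, hHomogeneous_of_subsingleton _⟩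
  · rw [sUnion_insert, sUnion_image, biUnion_of_singleton, union_comm]

theorem exists_countable_hHomogeneous_cover_iUnion {F : ℕ → Set (ℕ → Bool)}
    (hF : ∀ n, IsClosed (F n)) :
    ∃ 𝒢 : Set (Set (ℕ → Bool)), 𝒢.Countable ∧ (∀ G ∈ 𝒢, IsClosed G ∧ HHomogeneous G) ∧
      ⋃₀ 𝒢 = ⋃ n, F n := by
  choose 𝒢 hcount hhom hcover using fun n => (hF n).exists_countable_hHomogeneous_cover
  refine ⟨⋃ n, 𝒢 n, countable_iUnion hcount, fun G hG => ?_, by simp_rw [sUnion_iUnion, hcover]⟩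
  obtain ⟨n, hn⟩ := mem_iUnion.1 hG
  exact hhom n G hn

theorem sigmaHomogeneous_of_sUnion {X : Set (ℕ → Bool)} {𝒢 : Set (Set (ℕ → Bool))}
    (hcount : 𝒢.Countable)
    (hhom : ∀ G ∈ 𝒢, IsClosed (Subtype.val ⁻¹' G : Set X) ∧ HHomogeneous G) (hX : ⋃₀ 𝒢 = X) :
    SigmaHomogeneous X := by
  obtain ⟨f, hf⟩ := (hcount.insert ∅).exists_eq_range (insert_nonempty _ _)
  have hmem : ∀ i, f i = ∅ ∨ f i ∈ 𝒢 := fun i => by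
    rw [← mem_insert_iff, hf]
    exact mem_range_self i
  refine ⟨f, fun i => ?_, fun i => ?_, fun i => ?_, ?_⟩
  · rcases hmem i with h | h
    · exact h ▸ empty_subset X
    · exact hX ▸ subset_sUnion_of_mem h
  · rcases hmem i with h | h
    · rw [h, preimage_empty]
      exact isClosed_empty
    · exact (hhom _ h).1
  · rcases hmem i with h | h
    · rw [h]
      exact hHomogeneous_of_subsingleton _
    · exact (hhom _ h).2
  · rw [← sUnion_range, ← hf, sUnion_insert, empty_union, hX]

theorem IsSigmaCompact.union {X : Type*} [TopologicalSpace X] {s t : Set X}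
    (hs : IsSigmaCompact s) (ht : IsSigmaCompact t) : IsSigmaCompact (s ∪ t) :=
  union_eq_iUnion ▸ isSigmaCompact_iUnion _ (Bool.forall_bool.2 ⟨ht, hs⟩)

theorem isSigmaCompact_inter_sUnion {X : Type*} [TopologicalSpace X] [SecondCountableTopology X]
    (s : Set X) : IsSigmaCompact (s ∩ ⋃₀ {V | IsOpen V ∧ IsSigmaCompact (s ∩ V)}) := by
  obtain ⟨T, hT, hTsub, hTU⟩ := TopologicalSpace.isOpen_sUnion_countable
    {V | IsOpen V ∧ IsSigmaCompact (s ∩ V)} fun V hV => hV.1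
  rw [← hTU, sUnion_eq_biUnion, inter_iUnion₂]
  exact isSigmaCompact_biUnion hT fun V hV => (hTsub hV).2

theorem IsGδ.sigmaHomogeneous {X : Set (ℕ → Bool)} (hX : IsGδ X) : SigmaHomogeneous X := by
  set W := ⋃₀ {V : Set (ℕ → Bool) | IsOpen V ∧ IsSigmaCompact (X ∩ V)}
  have hW : IsOpen W := isOpen_sUnion fun V hV => hV.1
  obtain ⟨K, hK, hKW⟩ : IsSigmaCompact (X ∩ W) := isSigmaCompact_inter_sUnion X
  have hnlc : NowhereLocallyCompact (X \ W) := by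
    intro V hV hcpt
    refine eq_empty_of_forall_notMem fun y ⟨⟨_, hyW⟩, hyV⟩ => hyW ?_
    obtain ⟨B, hB, hyB, hBV⟩ := compact_exists_isClopen_in_isOpen hV hyV
    have hXB : X ∩ B = (X \ W) ∩ V ∩ B ∪ ⋃ n, K n ∩ B := by
      rw [← iUnion_inter, hKW]
      ext u
      have := @hBV u
      simp only [mem_inter_iff, mem_union, Set.mem_sdiff]
      tauto
    refine mem_sUnion_of_mem hyB ⟨hB.isOpen, hXB ▸ ?_⟩
    exact (hcpt.inter_right hB.isClosed).isSigmaCompact.union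
      (isSigmaCompact_iUnion_of_isCompact _ fun n => (hK n).inter_right hB.isClosed)
  obtain ⟨𝒢, hcount, hhom, hcover⟩ :=
    exists_countable_hHomogeneous_cover_iUnion fun n => (hK n).isClosed
  refine sigmaHomogeneous_of_sUnion (hcount.insert (X \ W)) ?_ ?_
  · rintro _ (rfl | hG)
    · refine ⟨isClosed_induced_iff.2 ⟨Wᶜ, hW.isClosed_compl, ?_⟩,
        (hX.inter hW.isClosed_compl.isGδ).hHomogeneous_of_nowhereLocallyCompact hnlc⟩
      ext u
      simp
    · exact ⟨(hhom _ hG).1.preimage continuous_subtype_val, (hhom _ hG).2⟩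
  · rw [sUnion_insert, hcover, hKW, sdiff_union_inter]

/-- Every Fσ subset of the Cantor space is σ-homogeneous, and every Gδ subset
of the Cantor space is σ-homogeneous. -/
theorem fsigma_and_gdelta_sigmaHomogeneous :
    (∀ X : Set (ℕ → Bool),
      (∃ F : ℕ → Set (ℕ → Bool), (∀ n, IsClosed (F n)) ∧ X = ⋃ n, F n) →
      SigmaHomogeneous X) ∧
    (∀ X : Set (ℕ → Bool), IsGδ X → SigmaHomogeneous X) := by
  refine ⟨fun X ⟨F, hF, hX⟩ => ?_, fun X hX => hX.sigmaHomogeneous⟩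
  obtain ⟨𝒢, hcount, hhom, hcover⟩ := exists_countable_hHomogeneous_cover_iUnion hF
  exact sigmaHomogeneous_of_sUnion hcount
    (fun G hG => ⟨(hhom G hG).1.preimage continuous_subtype_val, (hhom G hG).2⟩) (hX ▸ hcover)
end
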